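/- arXiv:0911.2274 — 7 statements merged into one kernel-verified Lean document; each statement's English description precedes it below -/
import Mathlib

section
/- Let H be a Heisenberg group (a group whose commutator subgroup [H,H] is contained in its centre Z(H)) such that the centre Z(H) has finite index in H. Let A be a maximal abelian subgroup of H (so Z(H) ⊆ A) and let χ' : A → ℂˣ be a homomorphism such that ker(χ'|_{Z(H)}) ∩ [H,H] = {1}. Then the induced representation Ind_A^H χ', namely the space of functions f : H → ℂ satisfying f(ah) = χ'(a)·f(h) for all a ∈ A and h ∈ H, with H acting by right translation (h·f)(g) = f(gh), is a nonzero irreducible representation of H. -/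
/-- A subgroup is maximal abelian: it is abelian, and any abelian subgroup
containing it is equal to it. -/
def Subgroup.IsMaximalAbelian {H : Type*} [Group H] (A : Subgroup H) : Prop :=
  (∀ x ∈ A, ∀ y ∈ A, x * y = y * x) ∧
    ∀ B : Subgroup H, A ≤ B → (∀ x ∈ B, ∀ y ∈ B, x * y = y * x) → B = A

/-- The space of the induced representation `Ind_A^H χ'`: functions `f : H → ℂ`
with `f (a * h) = χ' a * f h` for `a ∈ A`, as a subspace of `H → ℂ`. -/
noncomputable def inducedSpace {H : Type*} [Group H] (A : Subgroup H) (χ' : A →* ℂˣ) :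
    Submodule ℂ (H → ℂ) where
  carrier := {f | ∀ (a : A) (h : H), f ((a : H) * h) = (χ' a : ℂ) * f h}
  add_mem' := by
    intro f g hf hg a h
    simp only [Pi.add_apply, hf a h, hg a h, mul_add]
  zero_mem' := by
    intro a h
    simp
  smul_mem' := by
    intro c f hf a h
    simp only [Pi.smul_apply, hf a h, smul_eq_mul]
    ring


/-!
Since `[H, H] ⊆ Z(H) ⊆ A`, the subgroup `A` is normal of finite index. Let `δ` be the function
equal to `χ'` on `A` and to `0` off `A`. Every `f` in the induced space is the finite sum
`∑ f(gᵢ) • δ(· gᵢ⁻¹)` over coset representatives `gᵢ`, and right translation by `a ∈ A` acts on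
the `i`-th summand by the scalar `χ'(gᵢ a gᵢ⁻¹)`. These conjugate characters are pairwise distinct:
if `χ'(g a g⁻¹) = χ'(g' a g'⁻¹)` for all `a`, then `χ'` is trivial on the central commutators
`[g'⁻¹ g, a]`, which the kernel condition forces to be `1`, so `g'⁻¹ g` centralises `A` and
lies in `A` by maximality. An invariant subspace therefore contains each summand of each of its
elements; if it is nonzero it contains some translate of `δ`, hence `δ`, hence everything.
-/

theorem Submodule.mem_of_sum_mem_of_eigenvectors {K V α ι : Type*} [Field K] [AddCommGroup V]
    [Module K V] [DecidableEq ι] {W : Submodule K V} {T : α → Module.End K V}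
    (hW : ∀ a, ∀ v ∈ W, T a v ∈ W) {χ : ι → α → K} (hχ : Pairwise fun i j => χ i ≠ χ j)
    (s : Finset ι) {v : ι → V} (hv : ∀ i a, T a (v i) = χ i a • v i)
    (hs : ∑ i ∈ s, v i ∈ W) {i : ι} (hi : i ∈ s) : v i ∈ W := by
  induction s using Finset.strongInduction generalizing v with
  | H s ih =>
    by_cases hother : ∃ j ∈ s, j ≠ i
    · obtain ⟨j, hj, hji⟩ := hother
      obtain ⟨a, ha⟩ := Function.ne_iff.mp (hχ hji.symm)
      -- `T a - χ j a` kills `v j` and rescales the other eigenvectors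
      set w : ι → V := fun k => (χ k a - χ j a) • v k
      have hw : ∀ k b, T b (w k) = χ k b • w k := fun k b => by
        simp only [w, map_smul, hv, smul_comm (χ k b)]
      have hws : ∑ k ∈ s.erase j, w k ∈ W := by
        have hsum : ∑ k ∈ s.erase j, w k = T a (∑ k ∈ s, v k) - χ j a • ∑ k ∈ s, v k := by
          rw [Finset.sum_erase _ (by simp [w]), map_sum, Finset.smul_sum,
            ← Finset.sum_sub_distrib]
          simp only [w, hv, sub_smul]
        rw [hsum]
        exact W.sub_mem (hW a _ hs) (W.smul_mem _ hs)
      have hwi := ih _ (Finset.erase_ssubset hj) hw hws (Finset.mem_erase.mpr ⟨hji.symm, hi⟩)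
      exact (W.smul_mem_iff (sub_ne_zero.mpr ha)).mp hwi
    · push Not at hother
      rwa [Finset.sum_eq_single_of_mem i hi fun j hj hji => absurd (hother j hj) hji] at hs

open scoped commutatorElement

namespace Subgroup.IsMaximalAbelian

variable {H : Type*} [Group H] {A : Subgroup H}

theorem mem_of_forall_commute (hA : A.IsMaximalAbelian) {k : H}
    (hk : ∀ a ∈ A, k * a = a * k) : k ∈ A := by
  have hcomm : ∀ x ∈ insert k (A : Set H), ∀ y ∈ insert k (A : Set H), x * y = y * x := by
    rintro x (rfl | hx) y (rfl | hy)
    · rfl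
    · exact hk y hy
    · exact (hk x hx).symm
    · exact hA.1 x hx y hy
  have := isMulCommutative_closure hcomm
  have hB := hA.2 (closure (insert k A)) (fun a ha => subset_closure (Set.mem_insert_of_mem _ ha))
    fun x hx y hy => setLike_mul_comm hx hy
  exact hB ▸ subset_closure (Set.mem_insert k _)

theorem center_le (hA : A.IsMaximalAbelian) : center H ≤ A := fun _ hz =>
  hA.mem_of_forall_commute fun a _ => (mem_center_iff.mp hz a).symm

theorem normal_of_commutator_le_center (hA : A.IsMaximalAbelian)
    (hHeis : _root_.commutator H ≤ center H) : A.Normal :=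
  Subgroup.Normal.of_commutator_le H (hHeis.trans hA.center_le)

theorem inv_mul_mem_of_forall_map_conjNormal_eq (hA : A.IsMaximalAbelian)
    (hHeis : _root_.commutator H ≤ center H) [A.Normal] {χ' : A →* ℂˣ}
    (hker : ∀ h ∈ _root_.commutator H, h ∈ center H → ∀ hA' : h ∈ A, χ' ⟨h, hA'⟩ = 1 → h = 1)
    {g g' : H} (hχ : ∀ a : A, χ' (MulAut.conjNormal g a) = χ' (MulAut.conjNormal g' a)) :
    g'⁻¹ * g ∈ A := by
  refine hA.mem_of_forall_commute fun a ha => ?_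
  have hc : ⁅g'⁻¹ * g, a⁆ ∈ _root_.commutator H :=
    commutator_mem_commutator (mem_top _) (mem_top _)
  have hcA : ⁅g'⁻¹ * g, a⁆ ∈ A := hA.center_le (hHeis hc)
  have hquot : (⟨⁅g'⁻¹ * g, a⁆, hcA⟩ : A) =
      MulAut.conjNormal g ⟨a, ha⟩ * (MulAut.conjNormal g' ⟨a, ha⟩)⁻¹ := by
    ext
    calc ⁅g'⁻¹ * g, a⁆ = g' * ⁅g'⁻¹ * g, a⁆ * g'⁻¹ := by
          rw [mem_center_iff.mp (hHeis hc) g', mul_inv_cancel_right]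
      _ = g * a * g⁻¹ * (g' * a * g'⁻¹)⁻¹ := by simp only [commutatorElement_def]; group
  refine commutatorElement_eq_one_iff_mul_comm.mp (hker _ hc (hHeis hc) hcA ?_)
  rw [hquot, map_mul, map_inv, hχ, mul_inv_cancel]

end Subgroup.IsMaximalAbelian

theorem QuotientGroup.mul_inv_out_mem_iff {H : Type*} [Group H] {A : Subgroup H} [A.Normal]
    (x : H) (q : H ⧸ A) : x * q.out⁻¹ ∈ A ↔ (x : H ⧸ A) = q := by
  rw [← div_eq_mul_inv, ← QuotientGroup.eq_iff_div_mem, QuotientGroup.out_eq']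

section Induced

variable {H : Type*} [Group H] (A : Subgroup H) (χ' : A →* ℂˣ)

def rightTranslate (h : H) : (H → ℂ) →ₗ[ℂ] H → ℂ :=
  LinearMap.funLeft ℂ ℂ (· * h)

@[simp]
theorem rightTranslate_apply (h : H) (f : H → ℂ) (g : H) : rightTranslate h f g = f (g * h) :=
  rfl

open scoped Classical in
noncomputable def inducedDelta : H → ℂ := fun g => if hg : g ∈ A then (χ' ⟨g, hg⟩ : ℂ) else 0

theorem inducedDelta_mem : inducedDelta A χ' ∈ inducedSpace A χ' := by
  intro a g
  by_cases hg : g ∈ A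
  · simp only [inducedDelta, hg, mul_mem a.2 hg, dite_true]
    rw [← Units.val_mul, ← map_mul]
    rfl
  · have hag : (a : H) * g ∉ A := fun h => hg (by simpa using mul_mem (inv_mem a.2) h)
    simp [inducedDelta, hg, hag]

theorem inducedDelta_one : inducedDelta A χ' 1 = 1 := by
  simp only [inducedDelta, one_mem, dite_true]
  exact congrArg Units.val (map_one χ')

theorem inducedSpace_ne_bot : inducedSpace A χ' ≠ ⊥ := by
  refine (Submodule.ne_bot_iff _).mpr ⟨inducedDelta A χ', inducedDelta_mem A χ', fun h => ?_⟩
  simpa [h] using inducedDelta_one A χ'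

theorem inducedDelta_mul_mem (g : H) (b : A) :
    inducedDelta A χ' (g * b) = χ' b * inducedDelta A χ' g := by
  by_cases hg : g ∈ A
  · simp only [inducedDelta, hg, mul_mem hg b.2, dite_true]
    rw [mul_comm (χ' b : ℂ), ← Units.val_mul, ← map_mul]
    rfl
  · have hgb : g * b ∉ A := fun h => hg (by simpa using mul_mem h (inv_mem b.2))
    simp [inducedDelta, hg, hgb]

theorem apply_mul_inducedDelta_of_mem {f : H → ℂ} (hf : f ∈ inducedSpace A χ') {g x : H}
    (hx : x * g⁻¹ ∈ A) : f g * inducedDelta A χ' (x * g⁻¹) = f x := by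
  have hfx := hf ⟨_, hx⟩ g
  rw [inv_mul_cancel_right] at hfx
  simp [inducedDelta, hx, hfx, mul_comm]

variable [A.Normal]

theorem rightTranslate_rightTranslate_inv_inducedDelta (g : H) (a : A) :
    rightTranslate (a : H) (rightTranslate g⁻¹ (inducedDelta A χ')) =
      (χ' (MulAut.conjNormal g a) : ℂ) • rightTranslate g⁻¹ (inducedDelta A χ') := by
  funext x
  have hx : x * a * g⁻¹ = x * g⁻¹ * (MulAut.conjNormal g a : H) := by
    rw [MulAut.conjNormal_apply]; group
  simp only [rightTranslate_apply, Pi.smul_apply, smul_eq_mul, hx, inducedDelta_mul_mem]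

theorem eq_sum_smul_rightTranslate_inducedDelta [Fintype (H ⧸ A)] {f : H → ℂ}
    (hf : f ∈ inducedSpace A χ') :
    f = ∑ q : H ⧸ A, f q.out • rightTranslate q.out⁻¹ (inducedDelta A χ') := by
  funext x
  rw [Finset.sum_apply, Finset.sum_eq_single_of_mem (x : H ⧸ A) (Finset.mem_univ _)]
  · exact (apply_mul_inducedDelta_of_mem A χ' hf
      ((QuotientGroup.mul_inv_out_mem_iff x _).mpr rfl)).symm
  · intro q _ hq
    have hxq : x * q.out⁻¹ ∉ A := fun h => hq ((QuotientGroup.mul_inv_out_mem_iff x q).mp h).symm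
    simp [inducedDelta, hxq]

theorem inducedSpace_le_of_inducedDelta_mem [Finite (H ⧸ A)] {W : Submodule ℂ (H → ℂ)}
    (hW : ∀ f ∈ W, ∀ h : H, rightTranslate h f ∈ W) (hδ : inducedDelta A χ' ∈ W) :
    inducedSpace A χ' ≤ W := fun f hf => by
  have := Fintype.ofFinite (H ⧸ A)
  rw [eq_sum_smul_rightTranslate_inducedDelta A χ' hf]
  exact W.sum_mem fun q _ => W.smul_mem _ (hW _ hδ _)

end Induced

theorem inducedDelta_mem_of_ne_bot {H : Type*} [Group H] {A : Subgroup H}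
    (hA : A.IsMaximalAbelian) (hHeis : commutator H ≤ Subgroup.center H) {χ' : A →* ℂˣ}
    (hker : ∀ h ∈ commutator H, h ∈ Subgroup.center H →
      ∀ hA' : h ∈ A, χ' ⟨h, hA'⟩ = 1 → h = 1)
    [Finite (H ⧸ A)] {W : Submodule ℂ (H → ℂ)} (hWV : W ≤ inducedSpace A χ')
    (hW : ∀ f ∈ W, ∀ h : H, rightTranslate h f ∈ W) (hne : W ≠ ⊥) :
    inducedDelta A χ' ∈ W := by
  classical
  have := hA.normal_of_commutator_le_center hHeis
  have := Fintype.ofFinite (H ⧸ A)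
  obtain ⟨f, hfW, hf0⟩ := (Submodule.ne_bot_iff W).mp hne
  have hf := eq_sum_smul_rightTranslate_inducedDelta A χ' (hWV hfW)
  obtain ⟨q, hq⟩ : ∃ q : H ⧸ A, f q.out ≠ 0 := by
    by_contra! h
    exact hf0 (hf.trans (by simp [h]))
  have hsep : Pairwise fun q q' : H ⧸ A => (fun a : A => (χ' (MulAut.conjNormal q.out a) : ℂ)) ≠
      fun a => (χ' (MulAut.conjNormal q'.out a) : ℂ) := by
    intro q q' hqq' hχ
    have hmem := hA.inv_mul_mem_of_forall_map_conjNormal_eq hHeis hker fun a =>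
      Units.ext (congrFun hχ a)
    exact hqq' (by rwa [← QuotientGroup.out_eq' q, ← QuotientGroup.out_eq' q', eq_comm,
      QuotientGroup.eq])
  have hqW : f q.out • rightTranslate q.out⁻¹ (inducedDelta A χ') ∈ W :=
    Submodule.mem_of_sum_mem_of_eigenvectors (T := fun a : A => rightTranslate (a : H))
      (fun a v hv => hW v hv a) hsep Finset.univ
      (fun q a => by rw [map_smul, rightTranslate_rightTranslate_inv_inducedDelta, smul_comm])
      (hf ▸ hfW) (Finset.mem_univ q)
  have hδ : rightTranslate q.out (rightTranslate q.out⁻¹ (inducedDelta A χ')) =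
      inducedDelta A χ' := by
    funext x
    simp
  exact hδ ▸ hW _ ((W.smul_mem_iff hq).mp hqW) q.out

/-- The induced representation of a suitable character of a maximal abelian subgroup
of a Heisenberg group with finite central quotient is nonzero and irreducible
(under the right-translation action of `H`). -/
theorem induced_rep_irreducible
    (H : Type*) [Group H]
    (hHeis : commutator H ≤ Subgroup.center H)
    (hfin : (Subgroup.center H).FiniteIndex)
    (A : Subgroup H) (hA : A.IsMaximalAbelian)
    (χ' : A →* ℂˣ)
    (hker : ∀ h ∈ commutator H, h ∈ Subgroup.center H →
      ∀ hA' : h ∈ A, χ' ⟨h, hA'⟩ = 1 → h = 1) :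
    inducedSpace A χ' ≠ ⊥ ∧
    ∀ W : Submodule ℂ (H → ℂ), W ≤ inducedSpace A χ' →
      (∀ f ∈ W, ∀ h : H, (fun g => f (g * h)) ∈ W) →
      W = ⊥ ∨ W = inducedSpace A χ' := by
  have := hA.normal_of_commutator_le_center hHeis
  have := Subgroup.finiteIndex_of_le hA.center_le
  refine ⟨inducedSpace_ne_bot A χ', fun W hWV hW => ?_⟩
  rcases eq_or_ne W ⊥ with hbot | hne
  · exact .inl hbot
  · exact .inr (le_antisymm hWV (inducedSpace_le_of_inducedDelta_mem A χ' hW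
      (inducedDelta_mem_of_ne_bot hA hHeis hker hWV hW hne)))
end

section
/- Let H be a Heisenberg group (a group whose commutator subgroup [H,H] is contained in its centre Z(H)) such that the centre Z(H) has finite index in H, and let χ : Z(H) → ℂˣ be a character with ker(χ) ∩ [H,H] = {1}. Then for every group homomorphism φ : H → ℂˣ that is trivial on Z(H), there exists an element x ∈ H such that φ(h) = χ([h,x]) for every h ∈ H. -/
/-!
Because `[H, H]` is central, `(h, x) ↦ χ ⁅h, x⁆` is bimultiplicative and trivial on `Z(H)` in
each variable, so `x ↦ χ ⁅·, x⁆` is a homomorphism from `H` to the character group of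
`Q = H / Z(H)`. The condition on `ker χ` makes its kernel exactly `Z(H)`, so its image has `|Q|`
elements. A finite group has at most as many `ℂˣ`-valued characters as its abelianization has
elements, hence at most `|Q|`, so every character of `Q` is in the image.
-/

open scoped commutatorElement

open Subgroup

theorem nonempty_monoidHom_units_equiv_abelianization (G F : Type*) [Group G] [Finite G]
    [Field F] [IsSepClosed F] [CharZero F] :
    Nonempty ((G →* Fˣ) ≃ Abelianization G) := by
  have : NeZero (Monoid.exponent (Abelianization G) : F) :=
    ⟨Nat.cast_ne_zero.mpr Monoid.exponent_ne_zero_of_finite⟩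
  obtain ⟨e⟩ := CommGroup.monoidHom_mulEquiv_of_hasEnoughRootsOfUnity (Abelianization G) F
  exact ⟨Abelianization.lift.trans e.toEquiv⟩

instance finite_monoidHom_units (G F : Type*) [Group G] [Finite G]
    [Field F] [IsSepClosed F] [CharZero F] : Finite (G →* Fˣ) :=
  Finite.of_equiv _ (nonempty_monoidHom_units_equiv_abelianization G F).some.symm

theorem card_monoidHom_units_le (G F : Type*) [Group G] [Finite G]
    [Field F] [IsSepClosed F] [CharZero F] :
    Nat.card (G →* Fˣ) ≤ Nat.card G := by
  obtain ⟨e⟩ := nonempty_monoidHom_units_equiv_abelianization G F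
  rw [Nat.card_congr e]
  exact Nat.card_le_card_of_surjective _ QuotientGroup.mk_surjective

section CommutatorLeCenter

variable {H : Type*} [Group H]

theorem commutatorElement_mem_center_of_commutator_le (hH : commutator H ≤ center H) (a b : H) :
    ⁅a, b⁆ ∈ center H :=
  hH (commutator_mem_commutator (mem_top a) (mem_top b))

theorem commutatorElement_mul_left_of_commutator_le (hH : commutator H ≤ center H) (a b c : H) :
    ⁅a * b, c⁆ = ⁅a, c⁆ * ⁅b, c⁆ := by
  have hbc := mem_center_iff.mp (commutatorElement_mem_center_of_commutator_le hH b c)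
  rw [commutatorElement_mul_left_eq_conj_mul, hbc a, mul_inv_cancel_right]
  exact (hbc _).symm

theorem commutatorElement_mul_right_of_commutator_le (hH : commutator H ≤ center H) (a b c : H) :
    ⁅a, b * c⁆ = ⁅a, b⁆ * ⁅a, c⁆ := by
  have hac := mem_center_iff.mp (commutatorElement_mem_center_of_commutator_le hH a c)
  rw [commutatorElement_mul_right_eq_mul_conj, mul_assoc _ b, hac b, ← mul_assoc,
    mul_inv_cancel_right]

variable {M : Type*} [CommGroup M]

def commutatorPairing (hH : commutator H ≤ center H) (χ : center H →* M) :
    H →* H ⧸ center H →* M :=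
  MonoidHom.mk'
    (fun x ↦ QuotientGroup.lift (center H)
      (MonoidHom.mk' (fun h ↦ χ ⟨⁅h, x⁆, commutatorElement_mem_center_of_commutator_le hH h x⟩)
        fun a b ↦ by
          rw [← map_mul]
          exact congrArg χ (Subtype.ext (commutatorElement_mul_left_of_commutator_le hH a b x)))
      fun z hz ↦ by
        have hzx : ⁅z, x⁆ = 1 :=
          commutatorElement_eq_one_iff_mul_comm.mpr (mem_center_iff.mp hz x).symm
        simp only [MonoidHom.mem_ker, MonoidHom.mk'_apply, hzx]
        exact map_one χ)
    fun x y ↦ QuotientGroup.monoidHom_ext _ <| MonoidHom.ext fun h ↦ by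
      show χ _ = χ _ * χ _
      rw [← map_mul]
      exact congrArg χ (Subtype.ext (commutatorElement_mul_right_of_commutator_le hH h x y))

theorem commutatorPairing_apply_mk (hH : commutator H ≤ center H) (χ : center H →* M) (x h : H) :
    commutatorPairing hH χ x h = χ ⟨⁅h, x⁆, commutatorElement_mem_center_of_commutator_le hH h x⟩ :=
  rfl

theorem ker_commutatorPairing (hH : commutator H ≤ center H) (χ : center H →* M)
    (hχ : ∀ h ∈ commutator H, ∀ hz : h ∈ center H, χ ⟨h, hz⟩ = 1 → h = 1) :
    (commutatorPairing hH χ).ker = center H := by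
  ext x
  rw [MonoidHom.mem_ker, mem_center_iff]
  constructor
  · intro hx h
    have hχhx : χ ⟨⁅h, x⁆, _⟩ = 1 := DFunLike.congr_fun hx (h : H ⧸ center H)
    exact commutatorElement_eq_one_iff_mul_comm.mp
      (hχ _ (commutator_mem_commutator (mem_top h) (mem_top x)) _ hχhx)
  · intro hx
    refine QuotientGroup.monoidHom_ext _ (MonoidHom.ext fun h ↦ ?_)
    have hhx : ⁅h, x⁆ = 1 := commutatorElement_eq_one_iff_mul_comm.mpr (hx h)
    show χ ⟨⁅h, x⁆, _⟩ = 1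
    simp only [hhx]
    exact map_one χ

end CommutatorLeCenter

/-- In a Heisenberg group `H` with finite central quotient and a central character `χ`
with `ker χ ∩ [H,H] = 1`, every character of `H` trivial on the centre is of the form
`h ↦ χ ⁅h, x⁆` for some `x ∈ H`. -/
theorem character_of_central_quotient_is_commutator_pairing
    (H : Type*) [Group H]
    (hHeis : commutator H ≤ Subgroup.center H)
    (hfin : (Subgroup.center H).FiniteIndex)
    (χ : Subgroup.center H →* ℂˣ)
    (hker : ∀ h ∈ commutator H, ∀ hz : h ∈ Subgroup.center H, χ ⟨h, hz⟩ = 1 → h = 1)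
    (φ : H →* ℂˣ) (hφ : ∀ z ∈ Subgroup.center H, φ z = 1) :
    ∃ x : H, ∀ h : H, ∀ hc : ⁅h, x⁆ ∈ Subgroup.center H, φ h = χ ⟨⁅h, x⁆, hc⟩ := by
  have : Finite (H ⧸ center H) := Nat.finite_of_card_ne_zero hfin.index_ne_zero
  have hsurj : (commutatorPairing hHeis χ).range = ⊤ := by
    refine eq_top_of_le_card _ ?_
    rw [← index_ker, ker_commutatorPairing hHeis χ hker]
    exact card_monoidHom_units_le _ ℂ
  obtain ⟨x, hx⟩ := MonoidHom.mem_range.mp (hsurj ▸ mem_top (QuotientGroup.lift _ φ hφ))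
  refine ⟨x, fun h _ ↦ ?_⟩
  rw [← commutatorPairing_apply_mk hHeis, hx]
  rfl
end

section
/- Let H be a group, Z a subgroup of the centre of H of finite index m, and (π,V) an irreducible complex representation of H such that every element z ∈ Z acts on V as multiplication by a scalar. Then V is finite-dimensional, of dimension at most m. -/
/-- A submodule is invariant under a representation. -/
def Representation.IsInvariantSubmodule {H V : Type*} [Group H] [AddCommGroup V] [Module ℂ V]
    (π : Representation ℂ H V) (W : Submodule ℂ V) : Prop :=
  ∀ (h : H) (v : V), v ∈ W → π h v ∈ W

/-- A representation is irreducible: the space is nonzero and the only invariant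
subspaces are `⊥` and `⊤`. -/
def Representation.IsIrreducibleRep {H V : Type*} [Group H] [AddCommGroup V] [Module ℂ V]
    (π : Representation ℂ H V) : Prop :=
  Nontrivial V ∧ ∀ W : Submodule ℂ V, π.IsInvariantSubmodule W → W = ⊥ ∨ W = ⊤

/-- An irreducible representation of a group `H` on which a finite-index central
subgroup `Z` acts by scalars is finite-dimensional, of dimension at most the index. -/
theorem irreducible_rep_finite_dimensional_of_central_scalars
    (H : Type*) [Group H] (Z : Subgroup H) (hZ : Z ≤ Subgroup.center H)
    (m : ℕ) (hm : Z.index = m) (hm0 : m ≠ 0)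
    (V : Type*) [AddCommGroup V] [Module ℂ V] (π : Representation ℂ H V)
    (hirr : π.IsIrreducibleRep)
    (hscalar : ∀ z : Z, ∃ c : ℂ, ∀ v : V, π (z : H) v = c • v) :
    FiniteDimensional ℂ V ∧ Module.finrank ℂ V ≤ m := by
  classical
  obtain ⟨hnt, hmax⟩ := hirr
  obtain ⟨v₀, hv₀⟩ := exists_ne (0 : V)
  have hcard : Nat.card (H ⧸ Z) = m := hm
  have hfin : Finite (H ⧸ Z) := Nat.finite_of_card_ne_zero (by rw [hcard]; exact hm0)
  haveI : Fintype (H ⧸ Z) := Fintype.ofFinite _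
  set f : H ⧸ Z → V := fun q => π q.out v₀ with hf
  set W : Submodule ℂ V := Submodule.span ℂ (Set.range f) with hWdef
  -- each generator is nonzero
  have hfne : ∀ q : H ⧸ Z, f q ≠ 0 := by
    intro q hq
    apply hv₀
    have : π q.out⁻¹ (π q.out v₀) = v₀ := by
      rw [← Module.End.mul_apply, ← map_mul, inv_mul_cancel, map_one]; rfl
    rw [show π q.out v₀ = f q from rfl, hq, map_zero] at this
    exact this.symm
  -- invariance
  have hinv : π.IsInvariantSubmodule W := by
    intro h v hv
    induction hv using Submodule.span_induction with
    | mem x hx =>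
        obtain ⟨q, rfl⟩ := hx
        set q' : H ⧸ Z := QuotientGroup.mk (h * q.out) with hq'
        have hz : q'.out⁻¹ * (h * q.out) ∈ Z := by
          rw [← QuotientGroup.eq]
          rw [QuotientGroup.out_eq']
        obtain ⟨c, hc⟩ := hscalar ⟨_, hz⟩
        have key : π h (f q) = c • f q' := by
          have : h * q.out = q'.out * (q'.out⁻¹ * (h * q.out)) := by group
          calc π h (f q) = π (h * q.out) v₀ := by
                rw [map_mul]; rfl
            _ = π (q'.out * (q'.out⁻¹ * (h * q.out))) v₀ := by rw [← this]
            _ = π q'.out (π (q'.out⁻¹ * (h * q.out)) v₀) := by rw [map_mul]; rfl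
            _ = π q'.out (c • v₀) := by rw [hc v₀]
            _ = c • f q' := by rw [map_smul]
        rw [key]
        exact Submodule.smul_mem _ _ (Submodule.subset_span ⟨q', rfl⟩)
    | zero => rw [map_zero]; exact Submodule.zero_mem W
    | add x y _ _ hx hy => rw [map_add]; exact Submodule.add_mem _ hx hy
    | smul a x _ hx => rw [map_smul]; exact Submodule.smul_mem _ _ hx
  have hW : W = ⊤ := by
    rcases hmax W hinv with h | h
    · exfalso
      have : f (QuotientGroup.mk 1) ∈ W := Submodule.subset_span ⟨_, rfl⟩
      rw [h, Submodule.mem_bot] at this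
      exact hfne _ this
    · exact h
  have hfd : FiniteDimensional ℂ V :=
    ⟨hW ▸ Submodule.fg_span (Set.finite_range f)⟩
  refine ⟨hfd, ?_⟩
  have h1 : Module.finrank ℂ V = Module.finrank ℂ W := by
    rw [hW, finrank_top]
  have h2 : Module.finrank ℂ W ≤ (Set.range f).toFinset.card :=
    finrank_span_le_card (Set.range f)
  have h3 : (Set.range f).toFinset.card ≤ m := by
    rw [Set.toFinset_range]
    calc (Finset.univ.image f).card ≤ Finset.univ.card := Finset.card_image_le
      _ = Fintype.card (H ⧸ Z) := rfl
      _ = m := by rw [← Nat.card_eq_fintype_card, hcard]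
  omega
end

section
/- Let n be a positive integer and let 1 → Z → E → U → 1 be a central extension of groups; that is, q : E → U is a surjective group homomorphism whose kernel Z is contained in the centre of E. Assume that z^n = 1 for every z ∈ Z, that U is abelian, and that the map u ↦ u^{2n} is a bijection of U onto itself. Then there exists a unique group homomorphism s : U → E with q ∘ s = id_U; moreover, for every u ∈ U, s(u) = x^{2n} for any x ∈ E such that q(x)^{2n} = u. -/
/-!
The kernel `Z` of `q` is central and `E / Z ≅ U` is abelian, so all commutators of `E` lie in `Z`.
Hence `(x y)^k = x^k y^k c^(k choose 2)` with `c = y⁻¹ x⁻¹ y x`, and since `(2n choose 2) = n (2n - 1)`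
the map `x ↦ x^(2n)` is an endomorphism of `E`. It kills `Z`, so it factors through `q` as a
homomorphism `U → E`; precomposing with the inverse of `u ↦ u^(2n)` gives the splitting.
Any splitting `s` satisfies `s (q x ^ (2n)) = s (q x) ^ (2n) = x ^ (2n)`, since `s (q x)` and `x`
differ by an element of `Z`, which is what forces uniqueness.
-/

section CentralCommutator

variable {G : Type*} [Group G] {x y c : G}

theorem pow_mul_eq_mul_pow_mul_pow_of_mul_eq (hc : c ∈ Subgroup.center G)
    (h : y * x = x * y * c) (k : ℕ) : y ^ k * x = x * y ^ k * c ^ k := by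
  induction k with
  | zero => simp
  | succ k ih =>
    calc y ^ (k + 1) * x = y ^ k * x * (y * c) := by rw [pow_succ, mul_assoc, h]; group
      _ = x * y ^ k * (c ^ k * y) * c := by rw [ih]; group
      _ = x * y ^ k * y * (c ^ k * c) := by
          rw [← (Subgroup.mem_center_iff.mp (Subgroup.pow_mem _ hc k) y)]; group
      _ = x * y ^ (k + 1) * c ^ (k + 1) := by rw [pow_succ, pow_succ]; group

theorem mul_pow_eq_mul_pow_mul_pow_choose_two (hc : c ∈ Subgroup.center G)
    (h : y * x = x * y * c) (k : ℕ) : (x * y) ^ k = x ^ k * y ^ k * c ^ k.choose 2 := by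
  have hcomm (m : ℕ) (g : G) : g * c ^ m = c ^ m * g :=
    Subgroup.mem_center_iff.mp (Subgroup.pow_mem _ hc m) g
  induction k with
  | zero => simp
  | succ k ih =>
    calc (x * y) ^ (k + 1) = x ^ k * (y ^ k * x) * y * c ^ k.choose 2 := by
          rw [pow_succ, ih, mul_assoc (x ^ k * y ^ k), ← hcomm]; group
      _ = x ^ (k + 1) * y ^ k * (c ^ k * y) * c ^ k.choose 2 := by
          rw [pow_mul_eq_mul_pow_mul_pow_of_mul_eq hc h]; group
      _ = x ^ (k + 1) * y ^ (k + 1) * c ^ (k + 1).choose 2 := by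
          rw [← hcomm, Nat.choose_succ_succ k 1, Nat.choose_one_right]; group

end CentralCommutator

section Extension

variable {E U : Type*} [Group E] [Group U] {q : E →* U}

theorem pow_eq_pow_of_map_eq (hcentral : q.ker ≤ Subgroup.center E) {k : ℕ}
    (hk : ∀ z ∈ q.ker, z ^ k = 1) {x y : E} (h : q x = q y) : x ^ k = y ^ k := by
  have hz : x⁻¹ * y ∈ q.ker := by rw [MonoidHom.mem_ker, map_mul, map_inv, h, inv_mul_cancel]
  have hcomm : Commute x (x⁻¹ * y) := Subgroup.mem_center_iff.mp (hcentral hz) x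
  rw [← mul_inv_cancel_left x y, hcomm.mul_pow, hk _ hz, mul_one]

theorem pow_two_mul_eq_one_of_mem_ker {n : ℕ} (hexp : ∀ z ∈ q.ker, z ^ n = 1) :
    ∀ z ∈ q.ker, z ^ (2 * n) = 1 := fun z hz => by rw [mul_comm, pow_mul, hexp z hz, one_pow]

theorem apply_map_pow_two_mul_eq_pow (hcentral : q.ker ≤ Subgroup.center E) {n : ℕ}
    (hexp : ∀ z ∈ q.ker, z ^ n = 1) {s : U →* E} (hs : q.comp s = MonoidHom.id U) (x : E) :
    s (q x ^ (2 * n)) = x ^ (2 * n) := by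
  rw [map_pow]
  exact pow_eq_pow_of_map_eq hcentral (pow_two_mul_eq_one_of_mem_ker hexp)
    (DFunLike.congr_fun hs (q x))

theorem exists_map_pow_two_mul_eq (hq : Function.Surjective q) {n : ℕ}
    (hbij : Function.Bijective fun u : U => u ^ (2 * n)) (u : U) : ∃ x : E, q x ^ (2 * n) = u := by
  obtain ⟨v, rfl⟩ := hbij.surjective u
  obtain ⟨x, rfl⟩ := hq v
  exact ⟨x, rfl⟩

end Extension

section AbelianExtension

variable {E U : Type*} [Group E] [CommGroup U] {q : E →* U}

theorem mul_pow_two_mul (hcentral : q.ker ≤ Subgroup.center E) {n : ℕ}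
    (hexp : ∀ z ∈ q.ker, z ^ n = 1) (x y : E) :
    (x * y) ^ (2 * n) = x ^ (2 * n) * y ^ (2 * n) := by
  set c := y⁻¹ * x⁻¹ * y * x
  have hc : c ∈ q.ker := by simp [c, MonoidHom.mem_ker, mul_comm]
  have hchoose : (2 * n).choose 2 = n * (2 * n - 1) := by
    rw [Nat.choose_two_right, mul_assoc, Nat.mul_div_cancel_left _ two_pos]
  rw [mul_pow_eq_mul_pow_mul_pow_choose_two (hcentral hc) (by simp only [c]; group), hchoose,
    pow_mul c, hexp c hc, one_pow, mul_one]

variable (q) in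
def twoMulPowHom (hcentral : q.ker ≤ Subgroup.center E) (n : ℕ)
    (hexp : ∀ z ∈ q.ker, z ^ n = 1) : E →* E :=
  MonoidHom.mk' (· ^ (2 * n)) (mul_pow_two_mul hcentral hexp)

variable {n : ℕ} (hq : Function.Surjective q) (hcentral : q.ker ≤ Subgroup.center E)
  (hexp : ∀ z ∈ q.ker, z ^ n = 1) (hbij : Function.Bijective fun u : U => u ^ (2 * n))

noncomputable def twoMulPowSplitting : U →* E :=
  (q.liftOfSurjective hq ⟨twoMulPowHom q hcentral n hexp,
      fun z hz => MonoidHom.mem_ker.mpr (pow_two_mul_eq_one_of_mem_ker hexp z hz)⟩).comp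
    (MulEquiv.ofBijective (powMonoidHom (2 * n)) hbij).symm.toMonoidHom

theorem twoMulPowSplitting_apply_map_pow (x : E) :
    twoMulPowSplitting hq hcentral hexp hbij (q x ^ (2 * n)) = x ^ (2 * n) := by
  have hroot : (MulEquiv.ofBijective (powMonoidHom (2 * n)) hbij).symm (q x ^ (2 * n)) = q x :=
    (MulEquiv.ofBijective (powMonoidHom (2 * n)) hbij).symm_apply_apply (q x)
  simp only [twoMulPowSplitting, MonoidHom.comp_apply, MulEquiv.coe_toMonoidHom, hroot,
    MonoidHom.liftOfRightInverse_comp_apply]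
  rfl

theorem comp_twoMulPowSplitting : q.comp (twoMulPowSplitting hq hcentral hexp hbij) = .id U := by
  ext u
  obtain ⟨x, rfl⟩ := exists_map_pow_two_mul_eq hq hbij u
  rw [MonoidHom.comp_apply, twoMulPowSplitting_apply_map_pow, map_pow, MonoidHom.id_apply]

end AbelianExtension

theorem central_extension_splits_uniquely_abelian_general
    (n : ℕ)
    (E U : Type*) [Group E] [CommGroup U]
    (q : E →* U) (hq : Function.Surjective q)
    (hcentral : q.ker ≤ Subgroup.center E)
    (hexp : ∀ z ∈ q.ker, z ^ n = 1)
    (hbij : Function.Bijective fun u : U => u ^ (2 * n)) :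
    (∃! s : U →* E, q.comp s = MonoidHom.id U) ∧
    (∀ s : U →* E, q.comp s = MonoidHom.id U →
      ∀ (u : U) (x : E), q x ^ (2 * n) = u → s u = x ^ (2 * n)) := by
  refine ⟨⟨twoMulPowSplitting hq hcentral hexp hbij, comp_twoMulPowSplitting .., ?_⟩, ?_⟩
  · intro s hs
    ext u
    obtain ⟨x, rfl⟩ := exists_map_pow_two_mul_eq hq hbij u
    rw [apply_map_pow_two_mul_eq_pow hcentral hexp hs, twoMulPowSplitting_apply_map_pow]
  · rintro s hs u x rfl
    exact apply_map_pow_two_mul_eq_pow hcentral hexp hs x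

/-- A central extension of an abelian group `U`, by a group of exponent dividing `n`,
splits uniquely when `u ↦ u ^ (2 * n)` is a bijection of `U`; moreover the splitting
is given by `s u = x ^ (2 * n)` for any `x` with `q x ^ (2 * n) = u`. -/
theorem central_extension_splits_uniquely_abelian
    (n : ℕ) (hn : 0 < n)
    (E U : Type*) [Group E] [CommGroup U]
    (q : E →* U) (hq : Function.Surjective q)
    (hcentral : q.ker ≤ Subgroup.center E)
    (hexp : ∀ z ∈ q.ker, z ^ n = 1)
    (hbij : Function.Bijective fun u : U => u ^ (2 * n)) :
    (∃! s : U →* E, q.comp s = MonoidHom.id U) ∧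
    (∀ s : U →* E, q.comp s = MonoidHom.id U →
      ∀ (u : U) (x : E), q x ^ (2 * n) = u → s u = x ^ (2 * n)) :=
  central_extension_splits_uniquely_abelian_general n E U q hq hcentral hexp hbij
end

section
/- Let Y be a free ℤ-module of finite rank, B : Y × Y → ℤ a symmetric ℤ-bilinear form, α ∈ Y, and Q ∈ ℤ with B(α,α) = 2Q. Suppose w : Y → Y is a ℤ-linear automorphism such that w(α) = -α, that B(w(y), w(y')) = B(y, y') for all y, y' ∈ Y, and that w(y) - y ∈ ℤα for every y ∈ Y. Then Q divides B(α, y) for every y ∈ Y. -/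
theorem LinearMap.two_mul_apply_eq_neg_mul_of_map_eq_neg {R M : Type*} [CommRing R]
    [AddCommGroup M] [Module R M] (B : M →ₗ[R] M →ₗ[R] R) (w : M → M) {α y : M} {c : R}
    (hwα : w α = -α) (hwy : w y - y = c • α) (hinv : B (w α) (w y) = B α y) :
    2 * B α y = -(c * B α α) := by
  rw [hwα, sub_eq_iff_eq_add'.mp hwy] at hinv
  simp only [map_neg, map_add, map_smul, LinearMap.neg_apply, smul_eq_mul] at hinv
  linear_combination -hinv

theorem quadratic_divides_pairing_general
    (Y : Type*) [AddCommGroup Y] [Module ℤ Y]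
    (B : Y →ₗ[ℤ] Y →ₗ[ℤ] ℤ)
    (α : Y) (Q : ℤ) (hQ : B α α = 2 * Q)
    (w : Y ≃ₗ[ℤ] Y) (hwα : w α = -α)
    (hinv : ∀ y y' : Y, B (w y) (w y') = B y y')
    (hmove : ∀ y : Y, ∃ c : ℤ, w y - y = c • α) :
    ∀ y : Y, Q ∣ B α y := by
  intro y
  obtain ⟨c, hc⟩ := hmove y
  -- `hmove` is stated with the `ℤ`-action of the additive group, the lemma with that of the module
  have h := B.two_mul_apply_eq_neg_mul_of_map_eq_neg w hwα
    (hc.trans (int_smul_eq_zsmul _ c α).symm) (hinv α y)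
  rw [hQ] at h
  exact ⟨-c, by linarith⟩

/-- If `B` is a symmetric bilinear form on a finite-rank free `ℤ`-module invariant under
an automorphism `w` with `w α = -α` that moves every element by a multiple of `α`,
then `Q = B(α,α)/2` divides `B(α, y)` for all `y`. -/
theorem quadratic_divides_pairing
    (Y : Type*) [AddCommGroup Y] [Module ℤ Y] [Module.Free ℤ Y] [Module.Finite ℤ Y]
    (B : Y →ₗ[ℤ] Y →ₗ[ℤ] ℤ) (hsymm : ∀ y y' : Y, B y y' = B y' y)
    (α : Y) (Q : ℤ) (hQ : B α α = 2 * Q)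
    (w : Y ≃ₗ[ℤ] Y) (hwα : w α = -α)
    (hinv : ∀ y y' : Y, B (w y) (w y') = B y y')
    (hmove : ∀ y : Y, ∃ c : ℤ, w y - y = c • α) :
    ∀ y : Y, Q ∣ B α y :=
  quadratic_divides_pairing_general Y B α Q hQ w hwα hinv hmove
end

section
/- Let Y be a free ℤ-module of finite rank, B : Y × Y → ℤ a symmetric ℤ-bilinear form, α ∈ Y, and Q ∈ ℤ with B(α,α) = 2Q. Assume Q divides B(α, y) for every y ∈ Y. Let n be a positive integer, set n_α = n / gcd(n, Q), and let Λ = { x ∈ Y : n divides B(x,y) for all y ∈ Y }. Then n_α·α ∈ Λ, and conversely, for every integer c such that c·α ∈ Λ, the integer n_α divides 2c. -/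
/-! Write `g = gcd(n, Q)`, `n = g n'`, `Q = g Q'` with `n'` and `Q'` coprime, so that `n_α = n'`.
Since `Q ∣ B(α, y)`, `n' B(α, y)` is a multiple of `n' Q = n Q'`. Conversely, `c α ∈ Λ` gives
`n ∣ B(c α, α) = 2 c Q`, i.e. `n' ∣ 2 c Q'`, hence `n' ∣ 2 c`. -/

namespace Int

theorem div_gcd_mul_eq_mul_div_gcd (n Q : ℤ) : n / gcd n Q * Q = n * (Q / gcd n Q) := by
  rw [← Int.mul_ediv_assoc' Q (gcd_dvd_left n Q), Int.mul_ediv_assoc n (gcd_dvd_right n Q)]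

theorem dvd_div_gcd_mul_of_dvd {n Q y : ℤ} (h : Q ∣ y) : n ∣ n / gcd n Q * y :=
  calc n ∣ n / gcd n Q * Q := div_gcd_mul_eq_mul_div_gcd n Q ▸ dvd_mul_right n _
    _ ∣ n / gcd n Q * y := mul_dvd_mul_left _ h

theorem div_gcd_dvd_of_dvd_mul {n Q x : ℤ} (hn : n ≠ 0) (h : n ∣ x * Q) : n / gcd n Q ∣ x := by
  have hg : 0 < gcd n Q := gcd_pos_of_ne_zero_left Q hn
  obtain ⟨n', Q', hcop, hn', hQ'⟩ := exists_gcd_one hg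
  set g := gcd n Q
  have hg0 : (g : ℤ) ≠ 0 := by exact_mod_cast hg.ne'
  rw [hn', Int.mul_ediv_cancel _ hg0]
  rw [hn', hQ', ← mul_assoc, mul_dvd_mul_iff_right hg0] at h
  exact (isCoprime_iff_gcd_eq_one.mpr hcop).dvd_of_dvd_mul_right h

end Int

theorem lattice_intersection_with_coroot_line_general
    (Y : Type*) [AddCommGroup Y] [Module ℤ Y]
    (B : Y →ₗ[ℤ] Y →ₗ[ℤ] ℤ)
    (α : Y) (Q : ℤ) (hQ : B α α = 2 * Q)
    (hdvd : ∀ y : Y, Q ∣ B α y)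
    (n : ℕ) (hn : 0 < n)
    (nα : ℕ) (hnα : nα = n / Int.gcd (n : ℤ) Q) :
    (∀ y : Y, (n : ℤ) ∣ B ((nα : ℤ) • α) y) ∧
    (∀ c : ℤ, (∀ y : Y, (n : ℤ) ∣ B (c • α) y) → (nα : ℤ) ∣ 2 * c) := by
  have hnα' : (nα : ℤ) = n / Int.gcd n Q := by rw [hnα, Int.natCast_div]
  refine ⟨fun y => ?_, fun c hc => ?_⟩
  · rw [map_zsmul, LinearMap.smul_apply, smul_eq_mul, hnα']
    exact Int.dvd_div_gcd_mul_of_dvd (hdvd y)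
  · have hcQ : (n : ℤ) ∣ 2 * c * Q := by
      have := hc α
      rwa [map_zsmul, LinearMap.smul_apply, smul_eq_mul, hQ, mul_left_comm, ← mul_assoc] at this
    exact hnα' ▸ Int.div_gcd_dvd_of_dvd_mul (by exact_mod_cast hn.ne') hcQ

/-- With `Λ = {x : n ∣ B(x,y) for all y}` and `n_α = n / gcd(n, Q)`, one has
`n_α • α ∈ Λ`, and `c • α ∈ Λ` implies `n_α ∣ 2 c`: that is,
`n_α ℤα ⊆ Λ ∩ ℚα ⊆ (n_α/2) ℤα`. -/
theorem lattice_intersection_with_coroot_line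
    (Y : Type*) [AddCommGroup Y] [Module ℤ Y] [Module.Free ℤ Y] [Module.Finite ℤ Y]
    (B : Y →ₗ[ℤ] Y →ₗ[ℤ] ℤ) (hsymm : ∀ y y' : Y, B y y' = B y' y)
    (α : Y) (Q : ℤ) (hQ : B α α = 2 * Q)
    (hdvd : ∀ y : Y, Q ∣ B α y)
    (n : ℕ) (hn : 0 < n)
    (nα : ℕ) (hnα : nα = n / Int.gcd (n : ℤ) Q) :
    (∀ y : Y, (n : ℤ) ∣ B ((nα : ℤ) • α) y) ∧
    (∀ c : ℤ, (∀ y : Y, (n : ℤ) ∣ B (c • α) y) → (nα : ℤ) ∣ 2 * c) :=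
  lattice_intersection_with_coroot_line_general Y B α Q hQ hdvd n hn nα hnα
end

section
/- Let Y be a free ℤ-module of finite rank, α ∈ Y, and α^∨ : Y → ℤ a ℤ-linear map with α^∨(α) = 2. Let B : Y × Y → ℤ be a symmetric ℤ-bilinear form invariant under the reflection s_α : Y → Y defined by s_α(y) = y - α^∨(y)·α, and let Q ∈ ℤ satisfy B(α,α) = 2Q. Let n be a positive integer, set n_α = n / gcd(n, Q), and let Λ = { x ∈ Y : n divides B(x,y) for all y ∈ Y }. Then for every λ ∈ Λ, the integer n_α divides α^∨(λ). -/
/-!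
Invariance of `B` under `s_α`, evaluated at the pair `(λ, α)` with `s_α α = -α`, gives
`2 B(λ, α) = α^∨(λ) B(α, α) = 2 Q α^∨(λ)`, so `B(λ, α) = Q α^∨(λ)`. For `λ ∈ Λ` this says
`n ∣ Q α^∨(λ)`; dividing `n` and `Q` by their gcd leaves coprime factors, whence
`n / gcd(n, Q) ∣ α^∨(λ)`.
-/

open Module

lemma LinearMap.two_mul_apply_eq_of_reflection_invariant {R M : Type*} [CommRing R]
    [AddCommGroup M] [Module R M] {x : M} {f : Dual R M} (h : f x = 2)
    (B : M →ₗ[R] M →ₗ[R] R) (hB : ∀ y y', B (reflection h y) (reflection h y') = B y y')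
    (y : M) : 2 * B y x = f y * B x x := by
  have hyx := hB y x
  simp only [reflection_apply_self, reflection_apply, map_neg, map_sub, map_smul,
    LinearMap.sub_apply, LinearMap.smul_apply, smul_eq_mul] at hyx
  linear_combination -hyx

lemma Int.ediv_gcd_dvd_of_dvd_mul {n q c : ℤ} (hn : n ≠ 0) (h : n ∣ q * c) :
    n / n.gcd q ∣ c := by
  have hg : 0 < n.gcd q := Int.gcd_pos_of_ne_zero_left q hn
  have hcop : (n / n.gcd q).gcd (q / n.gcd q) = 1 := Int.gcd_div_gcd_div_gcd hg
  have hfac : n / n.gcd q * n.gcd q ∣ q / n.gcd q * n.gcd q * c := by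
    rwa [Int.ediv_mul_cancel (Int.gcd_dvd_left n q), Int.ediv_mul_cancel (Int.gcd_dvd_right n q)]
  rw [mul_right_comm, mul_dvd_mul_iff_right (by exact_mod_cast hg.ne')] at hfac
  exact Int.dvd_of_dvd_mul_right_of_gcd_one hfac hcop

theorem coroot_value_divisible_on_lattice_general
    (Y : Type*) [AddCommGroup Y] [Module ℤ Y]
    (B : Y →ₗ[ℤ] Y →ₗ[ℤ] ℤ)
    (α : Y) (αvee : Y →ₗ[ℤ] ℤ) (hαvee : αvee α = 2)
    (hinv : ∀ y y' : Y, B (y - αvee y • α) (y' - αvee y' • α) = B y y')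
    (Q : ℤ) (hQ : B α α = 2 * Q)
    (n : ℕ) (hn : 0 < n)
    (nα : ℕ) (hnα : nα = n / Int.gcd (n : ℤ) Q) :
    ∀ lam : Y, (∀ y : Y, (n : ℤ) ∣ B lam y) → (nα : ℤ) ∣ αvee lam := by
  -- The `•` in `hinv` is the `zsmul` of `AddCommGroup`, not the scalar action of `Module ℤ Y`.
  obtain rfl : ‹Module ℤ Y› = AddCommGroup.toIntModule Y := Subsingleton.elim _ _
  intro lam hlam
  have hpair : B lam α = Q * αvee lam := by
    have hrefl : ∀ y y', B (reflection hαvee y) (reflection hαvee y') = B y y' := by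
      simpa only [reflection_apply] using hinv
    refine mul_left_cancel₀ (two_ne_zero (α := ℤ)) ?_
    rw [LinearMap.two_mul_apply_eq_of_reflection_invariant hαvee B hrefl, hQ]
    ring
  have hdvd : (n : ℤ) ∣ Q * αvee lam := hpair ▸ hlam α
  rw [hnα, Int.natCast_div]
  exact Int.ediv_gcd_dvd_of_dvd_mul (by exact_mod_cast hn.ne') hdvd

/-- If `B` is a symmetric bilinear form invariant under the reflection
`s_α : y ↦ y - α^∨(y) • α`, `B(α,α) = 2Q`, and `Λ = {x : n ∣ B(x,y) for all y}`,
then `n_α = n / gcd(n,Q)` divides `α^∨(λ)` for every `λ ∈ Λ`. -/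
theorem coroot_value_divisible_on_lattice
    (Y : Type*) [AddCommGroup Y] [Module ℤ Y] [Module.Free ℤ Y] [Module.Finite ℤ Y]
    (B : Y →ₗ[ℤ] Y →ₗ[ℤ] ℤ) (hsymm : ∀ y y' : Y, B y y' = B y' y)
    (α : Y) (αvee : Y →ₗ[ℤ] ℤ) (hαvee : αvee α = 2)
    (hinv : ∀ y y' : Y, B (y - αvee y • α) (y' - αvee y' • α) = B y y')
    (Q : ℤ) (hQ : B α α = 2 * Q)
    (n : ℕ) (hn : 0 < n)
    (nα : ℕ) (hnα : nα = n / Int.gcd (n : ℤ) Q) :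
    ∀ lam : Y, (∀ y : Y, (n : ℤ) ∣ B lam y) → (nα : ℤ) ∣ αvee lam :=
  coroot_value_divisible_on_lattice_general Y B α αvee hαvee hinv Q hQ n hn nα hnα
end
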